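/- (Dominating Option, parts (i) and (ii)) Let G=(V,E_L,E_R) be an achievement positional game and let u,v∈V be such that {u},{v}∉E_L∪E_R and, for every edge e∈E_L∪E_R, u∈e implies v∈e. Then o(G_u) ≤_L o(G_v) and o(G^v) ≤_L o(G^u). -/

import Mathlib

/-!
Swapping `u` and `v` maps the board of `G_u` onto that of `G_v`. Since every edge through `u`
also passes through `v`, this relabelling turns each blue edge `e \ {u}` of `G_u` into a superset
of the blue edge `e \ {v}` of `G_v`, while the red edges of `G_v` (those avoiding `v`, hence `u`)
are fixed and are red edges of `G_u`. So a winning strategy of Left in `G_u`, relabelled, still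
wins in `G_v`, and conversely for Right; as a winning strategy of one player excludes a
non-losing strategy of the other, the results compare. Part (ii) is the same argument for
`G^v` and `G^u`.
-/

namespace APG

/-- The two players: Left and Right. -/
inductive Player : Type
  | L : Player
  | R : Player
deriving DecidableEq, Repr

/-- The opponent of a player. -/
def Player.other : Player → Player
  | .L => .R
  | .R => .L

/-- An achievement positional game: a finite vertex set together with the set of
blue edges (Left's winning sets) and the set of red edges (Right's winning sets). -/
structure Game : Type where
  V : Finset ℕ
  EL : Finset (Finset ℕ)
  ER : Finset (Finset ℕ)

/-- The edges are nonempty subsets of the vertex set. -/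
def WellFormed (G : Game) : Prop :=
  (∀ e ∈ G.EL, e ⊆ G.V ∧ e.Nonempty) ∧ (∀ e ∈ G.ER, e ⊆ G.V ∧ e.Nonempty)

/-- The winning sets of a given player. -/
def Game.edges (G : Game) : Player → Finset (Finset ℕ)
  | .L => G.EL
  | .R => G.ER

/-- The player who makes the `i`-th move (0-indexed) when `s` moves first. -/
def mover (s : Player) (i : ℕ) : Player := if i % 2 = 0 then s else s.other

/-- The set of vertices picked by player `p` along the history `h`
(the chronological list of the moves played so far), when `s` moved first. -/
def picked (s p : Player) (h : List ℕ) : Finset ℕ :=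
  ((Finset.range h.length).filter fun i => mover s i = p).image fun i => h.getD i 0

/-- The set `S` of picked vertices fills some edge of `E`. -/
def fills (E : Finset (Finset ℕ)) (S : Finset ℕ) : Prop := ∃ e ∈ E, e ⊆ S

/-- The game is over: some player has picked all the vertices of one of their edges. -/
def ended (G : Game) (s : Player) (h : List ℕ) : Prop :=
  fills G.EL (picked s .L h) ∨ fills G.ER (picked s .R h)

/-- `h` is a legal history: no vertex is picked twice, every picked vertex belongs to
the board, and no move is made after the game has ended. -/
def ValidHist (G : Game) (s : Player) (h : List ℕ) : Prop :=
  h.Nodup ∧ (∀ x ∈ h, x ∈ G.V) ∧ ∀ k, k < h.length → ¬ ended G s (h.take k)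

/-- A strategy: a map assigning to each position (history) a vertex to pick. -/
abbrev Strategy := List ℕ → ℕ

/-- Along `h`, every move of player `p` agrees with the strategy `σ`. -/
def Follows (s p : Player) (σ : Strategy) (h : List ℕ) : Prop :=
  ∀ k, k < h.length → mover s k = p → h.getD k 0 = σ (h.take k)

/-- A finished play: either the game has ended or all vertices have been picked. -/
def Complete (G : Game) (s : Player) (h : List ℕ) : Prop :=
  ended G s h ∨ h.length = G.V.card

/-- The strategy `σ` of player `p` always suggests a legal move (an unpicked vertex)
whenever the game is not over and it is `p`'s turn. -/
def Legal (G : Game) (s p : Player) (σ : Strategy) : Prop :=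
  ∀ h, ValidHist G s h → Follows s p σ h → ¬ ended G s h → h.length < G.V.card →
    mover s h.length = p → σ h ∈ G.V ∧ σ h ∉ h

/-- Player `p` has a winning strategy on `G` when `s` moves first: following it,
every finished play ends with `p` having filled one of their edges (and, the game
having ended right there, the opponent has not filled an edge first). -/
def WinsAs (G : Game) (s p : Player) : Prop :=
  ∃ σ : Strategy, Legal G s p σ ∧
    ∀ h, ValidHist G s h → Follows s p σ h → Complete G s h →
      fills (G.edges p) (picked s p h)

/-- Player `p` has a non-losing strategy on `G` when `s` moves first: following it,
the opponent never fills one of their edges. -/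
def NonLosingAs (G : Game) (s p : Player) : Prop :=
  ∃ σ : Strategy, Legal G s p σ ∧
    ∀ h, ValidHist G s h → Follows s p σ h → Complete G s h →
      ¬ fills (G.edges p.other) (picked s p.other h)

/-- The possible results of the game, for a fixed starting player. -/
inductive Result : Type
  | Lwin : Result
  | draw : Result
  | Rwin : Result
deriving DecidableEq, Repr

/-- The result of `G` with optimal play, when `s` moves first, is `r`:
a win for a player means that player has a winning strategy, a draw means
both players have non-losing strategies. -/
def resultIs (G : Game) (s : Player) : Result → Prop
  | .Lwin => WinsAs G s .L
  | .Rwin => WinsAs G s .R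
  | .draw => NonLosingAs G s .L ∧ NonLosingAs G s .R

/-- An outcome: the pair of results with optimal play
(when Left starts, when Right starts). -/
abbrev Outcome := Result × Result

/-- `G` has outcome `o`. -/
def hasOutcome (G : Game) (o : Outcome) : Prop :=
  resultIs G .L o.1 ∧ resultIs G .R o.2

/-- Numerical value of a result, from Left's point of view:
Right wins < draw < Left wins. -/
def Result.val : Result → ℕ
  | .Rwin => 0
  | .draw => 1
  | .Lwin => 2

/-- The partial order `≤_L` on outcomes, comparing both components simultaneously
from Left's point of view. -/
def outLE (o o' : Outcome) : Prop := o.1.val ≤ o'.1.val ∧ o.2.val ≤ o'.2.val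

def oL : Outcome := (.Lwin, .Lwin)
def oLminus : Outcome := (.Lwin, .draw)
def oN : Outcome := (.Lwin, .Rwin)
def oD : Outcome := (.draw, .draw)
def oRminus : Outcome := (.draw, .Rwin)
def oR : Outcome := (.Rwin, .Rwin)

/-- The updated game `G_u` after Left has picked `u`. -/
def subL (G : Game) (u : ℕ) : Game where
  V := G.V.erase u
  EL := G.EL.image fun e => e.erase u
  ER := G.ER.filter fun e => u ∉ e

/-- The updated game `G^u` after Right has picked `u`. -/
def subR (G : Game) (u : ℕ) : Game where
  V := G.V.erase u
  EL := G.EL.filter fun e => u ∉ e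
  ER := G.ER.image fun e => e.erase u

/-- The updated game `G_u^v` after Left has picked `u` and Right has picked `v`. -/
def updLR (G : Game) (u v : ℕ) : Game where
  V := (G.V.erase u).erase v
  EL := (G.EL.filter fun e => v ∉ e).image fun e => e.erase u
  ER := (G.ER.filter fun e => u ∉ e).image fun e => e.erase v

/-- The disjoint union of two games. -/
def gunion (G G' : Game) : Game where
  V := G.V ∪ G'.V
  EL := G.EL ∪ G'.EL
  ER := G.ER ∪ G'.ER

section Finset

variable {α : Type*} [DecidableEq α] {a b : α}

theorem _root_.Finset.image_swap_of_mem {s : Finset α} (ha : a ∈ s) (hb : b ∈ s) :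
    s.image (Equiv.swap a b) = s := by
  refine (Finset.map_eq_image _ _).symm.trans (Finset.map_perm fun x hx => ?_)
  rcases (Equiv.swap_apply_ne_self_iff.1 hx).2 with rfl | rfl
  exacts [ha, hb]

theorem _root_.Finset.image_swap_of_notMem {s : Finset α} (ha : a ∉ s) (hb : b ∉ s) :
    s.image (Equiv.swap a b) = s :=
  (Finset.image_congr fun _ hx => Equiv.swap_apply_of_ne_of_ne (ne_of_mem_of_not_mem hx ha)
    (ne_of_mem_of_not_mem hx hb)).trans Finset.image_id'

theorem _root_.Finset.image_erase_swap {s : Finset α} (ha : a ∈ s) (hb : b ∈ s) :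
    (s.erase a).image (Equiv.swap a b) = s.erase b := by
  rw [Finset.image_erase (Equiv.injective _), Finset.image_swap_of_mem ha hb,
    Equiv.swap_apply_left]

theorem _root_.Finset.erase_subset_image_erase_swap {s : Finset α} (hab : a ∈ s → b ∈ s) :
    s.erase b ⊆ (s.erase a).image (Equiv.swap a b) := by
  by_cases ha : a ∈ s
  · exact (Finset.image_erase_swap ha (hab ha)).ge
  · intro x hx
    obtain ⟨hxb, hxs⟩ := Finset.mem_erase.1 hx
    have hxa : x ≠ a := ne_of_mem_of_not_mem hxs ha
    exact Finset.mem_image.2 ⟨x, Finset.mem_erase.2 ⟨hxa, hxs⟩,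
      Equiv.swap_apply_of_ne_of_ne hxa hxb⟩

theorem _root_.Finset.erase_nonempty_of_ne_singleton {s : Finset α} (hs : s.Nonempty)
    (hsa : s ≠ {a}) : (s.erase a).Nonempty := by
  rw [Finset.nonempty_iff_ne_empty, Ne, Finset.erase_eq_empty_iff]
  exact not_or.2 ⟨hs.ne_empty, hsa⟩

end Finset

theorem Player.eq_or_eq_other (p q : Player) : q = p ∨ q = p.other := by
  cases p <;> cases q <;> simp [Player.other]

theorem Player.other_ne (p : Player) : p.other ≠ p := by
  cases p <;> simp [Player.other]

theorem Player.other_other (p : Player) : p.other.other = p := by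
  cases p <;> rfl

theorem ended_iff_fills (G : Game) (s p : Player) (h : List ℕ) :
    ended G s h ↔ fills (G.edges p) (picked s p h) ∨
      fills (G.edges p.other) (picked s p.other h) := by
  cases p <;> simp [ended, Game.edges, Player.other, or_comm]

theorem fills_mono {E : Finset (Finset ℕ)} {S T : Finset ℕ} (hST : S ⊆ T) :
    fills E S → fills E T :=
  fun ⟨e, he, heS⟩ => ⟨e, he, heS.trans hST⟩

theorem WellFormed.nonempty {G : Game} (hG : WellFormed G) {p : Player} {e : Finset ℕ}
    (he : e ∈ G.edges p) : e.Nonempty := by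
  cases p
  exacts [(hG.1 e he).2, (hG.2 e he).2]

theorem picked_map (s p : Player) (f : ℕ → ℕ) (h : List ℕ) :
    picked s p (h.map f) = (picked s p h).image f := by
  unfold picked
  rw [List.length_map, Finset.image_image]
  refine Finset.image_congr fun i hi => ?_
  have hi : i < h.length := by simpa using (Finset.mem_filter.1 hi).1
  simp [hi]

theorem picked_append_singleton_of_ne {s p : Player} {h : List ℕ} (x : ℕ)
    (hp : mover s h.length ≠ p) : picked s p (h ++ [x]) = picked s p h := by
  have hrange : (Finset.range (h ++ [x]).length).filter (mover s · = p) =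
      (Finset.range h.length).filter (mover s · = p) := by
    rw [List.length_append, List.length_singleton, Finset.range_add_one, Finset.filter_insert,
      if_neg hp]
  unfold picked
  rw [hrange]
  refine Finset.image_congr fun i hi => List.getD_append _ _ _ _ ?_
  simpa using (Finset.mem_filter.1 hi).1

theorem validHist_nil (G : Game) (s : Player) : ValidHist G s [] :=
  ⟨List.nodup_nil, by simp, by simp⟩

theorem validHist_append_singleton_iff {G : Game} {s : Player} {h : List ℕ} {x : ℕ} :
    ValidHist G s (h ++ [x]) ↔ ValidHist G s h ∧ ¬ ended G s h ∧ x ∈ G.V ∧ x ∉ h := by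
  have hprefix : ∀ k < h.length, ¬ ended G s ((h ++ [x]).take k) ↔ ¬ ended G s (h.take k) :=
    fun k hk => by rw [List.take_append_of_le_length hk.le]
  simp only [ValidHist, List.nodup_append, List.nodup_singleton, List.forall_mem_ne',
    List.length_append, List.length_singleton, Nat.forall_lt_succ_right, List.take_left',
    List.forall_mem_append, List.forall_mem_singleton, forall₂_congr hprefix]
  tauto

theorem ValidHist.length_le {G : Game} {s : Player} {h : List ℕ} (hv : ValidHist G s h) :
    h.length ≤ G.V.card := by
  rw [← List.toFinset_card_of_nodup hv.1]
  exact Finset.card_le_card fun x hx => hv.2.1 x (List.mem_toFinset.mp hx)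

theorem follows_nil (s p : Player) (σ : Strategy) : Follows s p σ [] := by
  simp [Follows]

theorem follows_append_singleton_iff {s p : Player} {σ : Strategy} {h : List ℕ} {x : ℕ} :
    Follows s p σ (h ++ [x]) ↔ Follows s p σ h ∧ (mover s h.length = p → x = σ h) := by
  have hprefix : ∀ k < h.length,
      (mover s k = p → (h ++ [x]).getD k 0 = σ ((h ++ [x]).take k)) ↔
        (mover s k = p → h.getD k 0 = σ (h.take k)) :=
    fun k hk => by rw [List.take_append_of_le_length hk.le, List.getD_append _ _ _ _ hk]
  simp only [Follows, List.length_append, List.length_singleton, Nat.forall_lt_succ_right,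
    forall₂_congr hprefix, List.take_left', List.getD_append_right _ _ _ _ le_rfl]
  simp

theorem exists_complete_play_of_validHist {G : Game} {s : Player} (σ : Player → Strategy)
    (hσ : ∀ p, Legal G s p (σ p)) (h : List ℕ) (hv : ValidHist G s h)
    (hf : ∀ p, Follows s p (σ p) h) :
    ∃ h', ValidHist G s h' ∧ (∀ p, Follows s p (σ p) h') ∧ Complete G s h' := by
  by_cases hc : Complete G s h
  · exact ⟨h, hv, hf, hc⟩
  have hne : ¬ ended G s h := fun he => hc (Or.inl he)
  have hlt : h.length < G.V.card := hv.length_le.lt_of_ne fun heq => hc (Or.inr heq)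
  obtain ⟨hxV, hxh⟩ := hσ _ h hv (hf _) hne hlt rfl
  refine exists_complete_play_of_validHist σ hσ (h ++ [σ (mover s h.length) h])
    (validHist_append_singleton_iff.2 ⟨hv, hne, hxV, hxh⟩)
    fun p => follows_append_singleton_iff.2 ⟨hf p, ?_⟩
  rintro rfl
  rfl
termination_by G.V.card - h.length
decreasing_by simp only [List.length_append, List.length_singleton]; omega

theorem exists_complete_play {G : Game} {s : Player} (σ : Player → Strategy)
    (hσ : ∀ p, Legal G s p (σ p)) :
    ∃ h, ValidHist G s h ∧ (∀ p, Follows s p (σ p) h) ∧ Complete G s h :=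
  exists_complete_play_of_validHist σ hσ [] (validHist_nil G s) fun p => follows_nil s p (σ p)

theorem not_winsAs_and_nonLosingAs (G : Game) (s p : Player) :
    ¬ (WinsAs G s p ∧ NonLosingAs G s p.other) := by
  rintro ⟨⟨σ, hσ, hwin⟩, ⟨τ, hτ, hsafe⟩⟩
  have hlegal : ∀ q, Legal G s q (Function.update (fun _ => τ) p σ q) := by
    intro q
    rcases p.eq_or_eq_other q with rfl | rfl
    · simpa using hσ
    · simpa [p.other_ne] using hτ
  obtain ⟨h, hv, hf, hc⟩ := exists_complete_play _ hlegal
  have hp := hwin h hv (by simpa using hf p) hc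
  exact hsafe h hv (by simpa [p.other_ne] using hf p.other) hc (by rwa [Player.other_other])

theorem ValidHist.not_fills_both {G : Game} (hG : WellFormed G) {s : Player} {h : List ℕ}
    (hv : ValidHist G s h) {p : Player} (hp : fills (G.edges p) (picked s p h)) :
    ¬ fills (G.edges p.other) (picked s p.other h) := by
  rcases List.eq_nil_or_concat' h with rfl | ⟨h, x, rfl⟩
  · obtain ⟨e, he, hsub⟩ := hp
    obtain ⟨y, hy⟩ := hG.nonempty he
    exact absurd (hsub hy) (Finset.notMem_empty y)
  · intro hq
    apply (validHist_append_singleton_iff.1 hv).2.1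
    rw [ended_iff_fills G s p]
    rcases p.eq_or_eq_other (mover s h.length) with hm | hm
    · rw [picked_append_singleton_of_ne (p := p.other) x (hm ▸ p.other_ne.symm)] at hq
      exact Or.inr hq
    · rw [picked_append_singleton_of_ne (p := p) x (hm ▸ p.other_ne)] at hp
      exact Or.inl hp

theorem WinsAs.nonLosingAs {G : Game} (hG : WellFormed G) {s p : Player} :
    WinsAs G s p → NonLosingAs G s p :=
  fun ⟨σ, hσ, hwin⟩ => ⟨σ, hσ, fun h hv hf hc => hv.not_fills_both hG (hwin h hv hf hc)⟩

theorem Result.val_le_of_winsAs {H H' : Game} (hH' : WellFormed H') {s : Player}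
    (hL : WinsAs H s .L → WinsAs H' s .L) (hR : WinsAs H' s .R → WinsAs H s .R)
    {r r' : Result} (hr : resultIs H s r) (hr' : resultIs H' s r') : r.val ≤ r'.val := by
  cases r <;> cases r' <;> simp only [Result.val, Nat.le_refl, Nat.zero_le, Nat.one_le_ofNat]
  · exact (not_winsAs_and_nonLosingAs H' s .L ⟨hL hr, hr'.2⟩).elim
  · exact (not_winsAs_and_nonLosingAs H' s .R ⟨hr', (hL hr).nonLosingAs hH'⟩).elim
  · exact (not_winsAs_and_nonLosingAs H s .R ⟨hR hr', hr.1⟩).elim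

def IsWinning (G : Game) (s p : Player) (σ : Strategy) : Prop :=
  ∀ h, ValidHist G s h → Follows s p σ h → Complete G s h → fills (G.edges p) (picked s p h)

def relabel (φ : ℕ ≃ ℕ) (σ : Strategy) : Strategy := fun h => φ (σ (h.map φ.symm))

theorem Follows.of_relabel {s p : Player} {φ : ℕ ≃ ℕ} {σ : Strategy} {h : List ℕ}
    (hf : Follows s p (relabel φ σ) h) : Follows s p σ (h.map φ.symm) := by
  intro k hk hm
  rw [List.length_map] at hk
  rw [List.getD_eq_getElem _ _ (by simpa using hk), List.getElem_map,
    ← List.getD_eq_getElem _ 0 hk, hf k hk hm, relabel, Equiv.symm_apply_apply, List.map_take]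

/-- Relabelling the vertices of `H` by `φ` gives the board of `H'`, on which every edge of `p`
has become (a superset of) an edge of `p` and no new edge of the opponent has appeared. -/
structure IsFavourableRelabelling (p : Player) (φ : ℕ ≃ ℕ) (H H' : Game) : Prop where
  V_eq : H'.V = H.V.image φ
  fills_own : ∀ f ∈ H.edges p, fills (H'.edges p) (f.image φ)
  fills_opp : ∀ f ∈ H'.edges p.other, fills (H.edges p.other) (f.image φ.symm)

namespace IsFavourableRelabelling

variable {p : Player} {φ : ℕ ≃ ℕ} {H H' : Game}

theorem symm (hφ : IsFavourableRelabelling p φ H H') :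
    IsFavourableRelabelling p.other φ.symm H' H where
  V_eq := by rw [hφ.V_eq, Finset.image_image]; simp
  fills_own := hφ.fills_opp
  fills_opp := by simpa only [Player.other_other, Equiv.symm_symm] using hφ.fills_own

theorem mem_V_iff (hφ : IsFavourableRelabelling p φ H H') {x : ℕ} :
    x ∈ H'.V ↔ φ.symm x ∈ H.V := by
  rw [hφ.V_eq, Finset.mem_image]
  exact ⟨fun ⟨y, hy, hyx⟩ => hyx ▸ (φ.symm_apply_apply y).symm ▸ hy,
    fun hx => ⟨φ.symm x, hx, φ.apply_symm_apply x⟩⟩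

theorem card_V_eq (hφ : IsFavourableRelabelling p φ H H') : H'.V.card = H.V.card := by
  rw [hφ.V_eq, Finset.card_image_of_injective _ φ.injective]

theorem fills_picked_own (hφ : IsFavourableRelabelling p φ H H') (s : Player) (h : List ℕ)
    (hfill : fills (H.edges p) (picked s p (h.map φ.symm))) :
    fills (H'.edges p) (picked s p h) := by
  obtain ⟨f, hf, hsub⟩ := hfill
  refine fills_mono ?_ (hφ.fills_own f hf)
  simpa [picked_map, Finset.image_image] using Finset.image_subset_image (f := φ) hsub

theorem fills_picked_opp (hφ : IsFavourableRelabelling p φ H H') (s : Player) (h : List ℕ)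
    (hfill : fills (H'.edges p.other) (picked s p.other h)) :
    fills (H.edges p.other) (picked s p.other (h.map φ.symm)) := by
  obtain ⟨f, hf, hsub⟩ := hfill
  rw [picked_map]
  exact fills_mono (Finset.image_subset_image hsub) (hφ.fills_opp f hf)

variable {s : Player} {σ : Strategy}

theorem ended_of_ended_map_symm (hφ : IsFavourableRelabelling p φ H H')
    (hσ : IsWinning H s p σ) {h : List ℕ} (hv : ValidHist H s (h.map φ.symm))
    (hf : Follows s p σ (h.map φ.symm)) (he : ended H s (h.map φ.symm)) : ended H' s h :=
  (ended_iff_fills H' s p h).2 (Or.inl (hφ.fills_picked_own s h (hσ _ hv hf (Or.inl he))))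

theorem validHist_map_symm (hφ : IsFavourableRelabelling p φ H H') (hσ : IsWinning H s p σ)
    {h : List ℕ} (hv : ValidHist H' s h) (hf : Follows s p (relabel φ σ) h) :
    ValidHist H s (h.map φ.symm) := by
  induction h using List.reverseRecOn with
  | nil => exact validHist_nil H s
  | append_singleton h x ih =>
    obtain ⟨hv, hne, hx, hxh⟩ := validHist_append_singleton_iff.1 hv
    have hf := (follows_append_singleton_iff.1 hf).1
    have hvmap := ih hv hf
    rw [List.map_append, List.map_singleton, validHist_append_singleton_iff]
    exact ⟨hvmap, fun he => hne (hφ.ended_of_ended_map_symm hσ hvmap hf.of_relabel he),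
      hφ.mem_V_iff.1 hx, by simpa using hxh⟩

theorem winsAs (hφ : IsFavourableRelabelling p φ H H') : WinsAs H s p → WinsAs H' s p := by
  rintro ⟨σ, hlegal, hσ⟩
  refine ⟨relabel φ σ, fun h hv hf hne hlt hm => ?_, fun h hv hf hc => ?_⟩
  all_goals
    have hvmap := hφ.validHist_map_symm hσ hv hf
    have hfmap := hf.of_relabel
  · obtain ⟨hmemV, hnotmem⟩ := hlegal _ hvmap hfmap
      (fun he => hne (hφ.ended_of_ended_map_symm hσ hvmap hfmap he))
      (by simpa [hφ.card_V_eq] using hlt) (by simpa using hm)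
    refine ⟨hφ.mem_V_iff.2 (by simpa [relabel] using hmemV), fun hmem => hnotmem ?_⟩
    simpa [relabel] using List.mem_map_of_mem (f := φ.symm) hmem
  · rcases hc with he | hfull
    · rcases (ended_iff_fills H' s p h).1 he with hown | hopp
      · exact hown
      · refine hφ.fills_picked_own s h (hσ _ hvmap hfmap (Or.inl ?_))
        exact (ended_iff_fills H s p _).2 (Or.inr (hφ.fills_picked_opp s h hopp))
    · exact hφ.fills_picked_own s h (hσ _ hvmap hfmap (Or.inr (by simp [hfull, hφ.card_V_eq])))

theorem outLE_of_hasOutcome (hφ : IsFavourableRelabelling .L φ H H') (hH' : WellFormed H')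
    {o o' : Outcome} (ho : hasOutcome H o) (ho' : hasOutcome H' o') : outLE o o' :=
  ⟨Result.val_le_of_winsAs hH' hφ.winsAs hφ.symm.winsAs ho.1 ho'.1,
    Result.val_le_of_winsAs hH' hφ.winsAs hφ.symm.winsAs ho.2 ho'.2⟩

end IsFavourableRelabelling

section Domination

variable {E : Finset (Finset ℕ)} {u v : ℕ}

theorem fills_image_erase_swap (hdom : ∀ e ∈ E, u ∈ e → v ∈ e) {f : Finset ℕ}
    (hf : f ∈ E.image fun e => e.erase u) :
    fills (E.image fun e => e.erase v) (f.image (Equiv.swap u v)) := by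
  obtain ⟨e, he, rfl⟩ := Finset.mem_image.1 hf
  exact ⟨e.erase v, Finset.mem_image_of_mem _ he,
    Finset.erase_subset_image_erase_swap (hdom e he)⟩

theorem fills_filter_swap (hdom : ∀ e ∈ E, u ∈ e → v ∈ e) {f : Finset ℕ}
    (hf : f ∈ E.filter fun e => v ∉ e) :
    fills (E.filter fun e => u ∉ e) (f.image (Equiv.swap u v)) := by
  obtain ⟨hfE, hvf⟩ := Finset.mem_filter.1 hf
  have huf : u ∉ f := fun huf => hvf (hdom f hfE huf)
  exact ⟨f, Finset.mem_filter.2 ⟨hfE, huf⟩, (Finset.image_swap_of_notMem huf hvf).ge⟩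

variable {G : Game}

theorem isFavourableRelabelling_subL (hu : u ∈ G.V) (hv : v ∈ G.V)
    (hdomL : ∀ e ∈ G.EL, u ∈ e → v ∈ e) (hdomR : ∀ e ∈ G.ER, u ∈ e → v ∈ e) :
    IsFavourableRelabelling .L (Equiv.swap u v) (subL G u) (subL G v) where
  V_eq := (Finset.image_erase_swap hu hv).symm
  fills_own _ hf := fills_image_erase_swap hdomL hf
  fills_opp _ hf := by rw [Equiv.symm_swap]; exact fills_filter_swap hdomR hf

theorem isFavourableRelabelling_subR (hu : u ∈ G.V) (hv : v ∈ G.V)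
    (hdomL : ∀ e ∈ G.EL, u ∈ e → v ∈ e) (hdomR : ∀ e ∈ G.ER, u ∈ e → v ∈ e) :
    IsFavourableRelabelling .L (Equiv.swap u v) (subR G v) (subR G u) where
  V_eq := by rw [Equiv.swap_comm]; exact (Finset.image_erase_swap hv hu).symm
  fills_own _ hf := fills_filter_swap hdomL hf
  fills_opp _ hf := by rw [Equiv.symm_swap]; exact fills_image_erase_swap hdomR hf

end Domination

theorem WellFormed.subL {G : Game} (hG : WellFormed G) {u : ℕ} (hu : {u} ∉ G.EL) :
    WellFormed (subL G u) := by
  refine ⟨fun f hf => ?_, fun f hf => ?_⟩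
  · obtain ⟨e, he, rfl⟩ := Finset.mem_image.1 hf
    exact ⟨Finset.erase_subset_erase _ (hG.1 e he).1,
      Finset.erase_nonempty_of_ne_singleton (hG.1 e he).2 fun h => hu (h ▸ he)⟩
  · obtain ⟨hf, huf⟩ := Finset.mem_filter.1 hf
    exact ⟨Finset.subset_erase.2 ⟨(hG.2 f hf).1, huf⟩, (hG.2 f hf).2⟩

theorem WellFormed.subR {G : Game} (hG : WellFormed G) {u : ℕ} (hu : {u} ∉ G.ER) :
    WellFormed (subR G u) := by
  refine ⟨fun f hf => ?_, fun f hf => ?_⟩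
  · obtain ⟨hf, huf⟩ := Finset.mem_filter.1 hf
    exact ⟨Finset.subset_erase.2 ⟨(hG.1 f hf).1, huf⟩, (hG.1 f hf).2⟩
  · obtain ⟨e, he, rfl⟩ := Finset.mem_image.1 hf
    exact ⟨Finset.erase_subset_erase _ (hG.2 e he).1,
      Finset.erase_nonempty_of_ne_singleton (hG.2 e he).2 fun h => hu (h ▸ he)⟩

/-- Dominating option, parts (i) and (ii): if every edge containing `u` also contains
`v`, then `o(G_u) ≤_L o(G_v)` and `o(G^v) ≤_L o(G^u)`. -/
theorem dominating_option_i_ii (G : Game) (hG : WellFormed G) (u v : ℕ)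
    (hu : u ∈ G.V) (hv : v ∈ G.V)
    (hsu : ({u} : Finset ℕ) ∉ G.EL ∪ G.ER) (hsv : ({v} : Finset ℕ) ∉ G.EL ∪ G.ER)
    (hdom : ∀ e ∈ G.EL ∪ G.ER, u ∈ e → v ∈ e) :
    (∀ o o' : Outcome, hasOutcome (subL G u) o → hasOutcome (subL G v) o' → outLE o o') ∧
    (∀ o o' : Outcome, hasOutcome (subR G v) o → hasOutcome (subR G u) o' → outLE o o') := by
  have hdomL : ∀ e ∈ G.EL, u ∈ e → v ∈ e := fun e he => hdom e (Finset.mem_union_left _ he)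
  have hdomR : ∀ e ∈ G.ER, u ∈ e → v ∈ e := fun e he => hdom e (Finset.mem_union_right _ he)
  have hWFv : WellFormed (subL G v) := hG.subL fun h => hsv (Finset.mem_union_left _ h)
  have hWFu : WellFormed (subR G u) := hG.subR fun h => hsu (Finset.mem_union_right _ h)
  exact ⟨fun _ _ => (isFavourableRelabelling_subL hu hv hdomL hdomR).outLE_of_hasOutcome hWFv,
    fun _ _ => (isFavourableRelabelling_subR hu hv hdomL hdomR).outLE_of_hasOutcome hWFu⟩

end APG
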